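/- Fix σ > 0, T > 0 and S₀ = K > 0. Let C₀^B = S₀σ·√(T/(2π)) and C₀^{BS} = S₀·(Φ(σ√T/2) − Φ(−σ√T/2)) be the at-the-money Bachelier and Black–Merton–Scholes call prices with σ^B = S₀σ and σ^{BS} = σ. Then the relative error satisfies (C₀^B − C₀^{BS})/C₀^B ≤ T·σ²/12. -/

import Mathlib

open MeasureTheory

/-- The standard normal cumulative distribution function Φ. -/
noncomputable def stdNormalCdf (x : ℝ) : ℝ :=
  ∫ y in Set.Iic x, (Real.sqrt (2 * Real.pi))⁻¹ * Real.exp (-y ^ 2 / 2)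

/-! With `a = σ√T/2`, the Bachelier price is `S₀ · 2a/√(2π)` and the Black–Scholes price is
`S₀/√(2π) · ∫_{-a}^{a} exp(-y²/2) dy`. Integrating `exp(-y²/2) ≥ 1 - y²/2` bounds the integral
below by `2a - a³/3`, so the relative error is at most `a²/6 = Tσ²/24`. -/

open Real

lemma integrable_stdNormal_density :
    Integrable fun y : ℝ => (√(2 * π))⁻¹ * exp (-y ^ 2 / 2) := by
  refine Integrable.const_mul ?_ _
  simpa [neg_div, div_eq_inv_mul] using integrable_exp_neg_mul_sq (b := 2⁻¹) (by norm_num)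

lemma stdNormalCdf_sub_stdNormalCdf_neg (a : ℝ) :
    stdNormalCdf a - stdNormalCdf (-a) = (√(2 * π))⁻¹ * ∫ y in -a..a, exp (-y ^ 2 / 2) := by
  rw [stdNormalCdf, stdNormalCdf, ← intervalIntegral.integral_const_mul,
    ← intervalIntegral.integral_Iic_sub_Iic integrable_stdNormal_density.integrableOn
      integrable_stdNormal_density.integrableOn]

lemma integral_one_sub_sq_div_two (a : ℝ) :
    ∫ y in -a..a, (1 - y ^ 2 / 2) = 2 * a - a ^ 3 / 3 := by
  simp only [div_eq_mul_inv _ (2 : ℝ)]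
  rw [intervalIntegral.integral_sub intervalIntegrable_const
      ((by fun_prop : Continuous fun y : ℝ => y ^ 2 * 2⁻¹).intervalIntegrable _ _),
    intervalIntegral.integral_mul_const, integral_pow]
  simp only [intervalIntegral.integral_const, smul_eq_mul, mul_one]
  ring

lemma two_mul_sub_pow_three_div_three_le_integral_exp {a : ℝ} (ha : 0 ≤ a) :
    2 * a - a ^ 3 / 3 ≤ ∫ y in -a..a, exp (-y ^ 2 / 2) := by
  rw [← integral_one_sub_sq_div_two]
  refine intervalIntegral.integral_mono_on (by linarith)
    ((by fun_prop : Continuous fun y : ℝ => 1 - y ^ 2 / 2).intervalIntegrable _ _)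
    ((by fun_prop : Continuous fun y : ℝ => exp (-y ^ 2 / 2)).intervalIntegrable _ _) fun y _ => ?_
  linarith [add_one_le_exp (-y ^ 2 / 2)]

lemma atm_relative_error_le {a : ℝ} (ha : 0 < a) :
    (2 * a / √(2 * π) - (stdNormalCdf a - stdNormalCdf (-a))) / (2 * a / √(2 * π))
      ≤ a ^ 2 / 6 := by
  have key := two_mul_sub_pow_three_div_three_le_integral_exp ha.le
  rw [stdNormalCdf_sub_stdNormalCdf_neg]
  set I := ∫ y in -a..a, exp (-y ^ 2 / 2)
  have hs : 0 < √(2 * π) := by positivity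
  rw [div_le_iff₀ (by positivity)]
  field_simp
  nlinarith

/-- Relative error of the at-the-money Black–Merton–Scholes price with respect to the
Bachelier price: `(C₀^B − C₀^{BS})/C₀^B ≤ Tσ²/12`. -/
theorem bachelier_vs_black_scholes_atm_relative_error (σ T S₀ : ℝ)
    (hσ : 0 < σ) (hT : 0 < T) (hS₀ : 0 < S₀) :
    (S₀ * σ * Real.sqrt (T / (2 * Real.pi))
        - S₀ * (stdNormalCdf (σ * Real.sqrt T / 2) - stdNormalCdf (-(σ * Real.sqrt T / 2))))
      / (S₀ * σ * Real.sqrt (T / (2 * Real.pi)))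
      ≤ T * σ ^ 2 / 12 := by
  set a := σ * √T / 2 with ha
  have hBachelier : σ * √(T / (2 * π)) = 2 * a / √(2 * π) := by
    rw [sqrt_div hT.le, ha]
    ring
  have ha_sq : a ^ 2 = T * σ ^ 2 / 4 := by
    rw [ha, div_pow, mul_pow, sq_sqrt hT.le]
    ring
  rw [mul_assoc, hBachelier, ← mul_sub, mul_div_mul_left _ _ hS₀.ne']
  calc _ ≤ a ^ 2 / 6 := atm_relative_error_le (by positivity)
    _ ≤ T * σ ^ 2 / 12 := by rw [ha_sq]; linarith [mul_pos hT (pow_pos hσ 2)]
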